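/- Let A be a p×p real matrix with nonzero diagonal entries, and let L be the diagonal matrix with Lᵢᵢ = aᵢᵢ/Σⱼaᵢⱼ². Then ‖LA − I_p‖² = p − Σᵢ Ãᵢᵢ where Ãᵢᵢ = aᵢᵢ²/Σⱼ aᵢⱼ². In particular, inf over diagonal L' of ‖L'A − I_p‖² is attained and afterwards minimizing over row permutations gives inf_{C∈C} ‖CA−I_p‖² = p − max_P tr(PÃ). -/

import Mathlib

/-!
For a monomial matrix `C = P_σ · diag c`, row `σ i` of `C A - 1` is `c i • A i - e (σ i)`. Writing
`s i = ∑ⱼ A i j ^ 2`, its squared norm is `s i * (c i - A i (σ i) / s i) ^ 2 + 1 - Ã i (σ i)`, so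
`‖C A - 1‖² = p - tr (P_σ Ã) + ∑ᵢ s i * (c i - A i (σ i) / s i) ^ 2`.
For fixed `σ` this is minimized at `c i = A i (σ i) / s i`; that scaling may have zero entries, but
the value it gives is still the infimum over invertible scalings, by continuity and density.
-/

open Matrix Finset

def permMat (p : ℕ) (σ : Equiv.Perm (Fin p)) : Matrix (Fin p) (Fin p) ℝ :=
  Matrix.of fun i j => if σ j = i then 1 else 0

def PJDset (p : ℕ) : Set (Matrix (Fin p) (Fin p) ℝ) :=
  {C | ∃ (σ : Equiv.Perm (Fin p)) (J D : Fin p → ℝ),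
    (∀ i, J i = 1 ∨ J i = -1) ∧ (∀ i, 0 < D i) ∧
    C = permMat p σ * Matrix.diagonal J * Matrix.diagonal D}

def frobSq {p : ℕ} (M : Matrix (Fin p) (Fin p) ℝ) : ℝ := ∑ i, ∑ j, (M i j) ^ 2

noncomputable def Dsq (p : ℕ) (A : Matrix (Fin p) (Fin p) ℝ) : ℝ :=
  (1 / ((p : ℝ) - 1)) * sInf ((fun C => frobSq (C * A - 1)) '' PJDset p)

noncomputable def Atilde {p : ℕ} (A : Matrix (Fin p) (Fin p) ℝ) : Matrix (Fin p) (Fin p) ℝ :=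
  Matrix.of fun i j => (A i j) ^ 2 / ∑ k, (A i k) ^ 2

theorem csInf_le_of_mapsTo_of_dense {X α : Type*} [TopologicalSpace X]
    [ConditionallyCompleteLinearOrder α] [TopologicalSpace α] [OrderClosedTopology α]
    {f : X → α} {U : Set X} {S : Set α} (hf : Continuous f) (hU : Dense U) (hS : BddBelow S)
    (hfU : Set.MapsTo f U S) (x : X) : sInf S ≤ f x :=
  closure_minimal (fun _ hy => csInf_le hS hy) isClosed_Ici (map_mem_closure hf (hU x) hfU)

theorem sum_sq_mul_sub_indicator {n : Type*} [Fintype n] [DecidableEq n] (a : n → ℝ)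
    (ha : ∑ j, a j ^ 2 ≠ 0) (t : n) (c : ℝ) :
    ∑ j, (c * a j - if t = j then 1 else 0) ^ 2
      = (1 - a t ^ 2 / ∑ j, a j ^ 2) + (∑ j, a j ^ 2) * (c - a t / ∑ j, a j ^ 2) ^ 2 := by
  have hexpand : ∀ j, (c * a j - if t = j then 1 else 0) ^ 2
      = c ^ 2 * a j ^ 2 - (if t = j then 2 * c * a j - 1 else 0) := by
    intro j; split_ifs <;> ring
  simp only [hexpand, sum_sub_distrib, ← mul_sum, sum_ite_eq, mem_univ, if_true]
  field_simp
  ring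

section

variable {p : ℕ}

theorem permMat_one : permMat p 1 = 1 := by
  ext i j
  simp [permMat, Matrix.one_apply, eq_comm]

theorem permMat_mul_apply (σ : Equiv.Perm (Fin p)) (M : Matrix (Fin p) (Fin p) ℝ) (i j : Fin p) :
    (permMat p σ * M) i j = M (σ.symm i) j := by
  simp [permMat, Matrix.mul_apply, ite_mul, ← Equiv.eq_symm_apply]

theorem trace_permMat_mul (σ : Equiv.Perm (Fin p)) (M : Matrix (Fin p) (Fin p) ℝ) :
    trace (permMat p σ * M) = ∑ i, M i (σ i) := by
  simp only [trace, Matrix.diag, permMat_mul_apply]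
  simpa using Equiv.sum_comp σ.symm fun i => M i (σ i)

theorem frobSq_permMat_mul_sub_one (σ : Equiv.Perm (Fin p)) (M : Matrix (Fin p) (Fin p) ℝ) :
    frobSq (permMat p σ * M - 1) = ∑ i, ∑ j, (M i j - if σ i = j then 1 else 0) ^ 2 := by
  rw [frobSq, ← Equiv.sum_comp σ]
  simp [permMat_mul_apply, Matrix.one_apply]

theorem frobSq_permMat_mul_diagonal_mul_sub_one {A : Matrix (Fin p) (Fin p) ℝ}
    (hrow : ∀ i, ∑ j, A i j ^ 2 ≠ 0) (σ : Equiv.Perm (Fin p)) (c : Fin p → ℝ) :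
    frobSq (permMat p σ * diagonal c * A - 1)
      = (p - trace (permMat p σ * Atilde A))
        + ∑ i, (∑ j, A i j ^ 2) * (c i - A i (σ i) / ∑ j, A i j ^ 2) ^ 2 := by
  simp only [mul_assoc, frobSq_permMat_mul_sub_one, diagonal_mul,
    sum_sq_mul_sub_indicator _ (hrow _), sum_add_distrib, sum_sub_distrib, trace_permMat_mul]
  simp [Atilde]

theorem mem_PJDset_iff {C : Matrix (Fin p) (Fin p) ℝ} :
    C ∈ PJDset p ↔ ∃ (σ : Equiv.Perm (Fin p)) (c : Fin p → ℝ),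
      (∀ i, c i ≠ 0) ∧ C = permMat p σ * diagonal c := by
  constructor
  · rintro ⟨σ, J, D, hJ, hD, rfl⟩
    refine ⟨σ, J * D, fun i => ?_, by rw [mul_assoc, diagonal_mul_diagonal]; rfl⟩
    rcases hJ i with h | h <;> simp [h, (hD i).ne']
  · rintro ⟨σ, c, hc, rfl⟩
    refine ⟨σ, fun i => SignType.sign (c i), fun i => |c i|, fun i => ?_,
      fun i => abs_pos.mpr (hc i), ?_⟩
    · rcases (hc i).lt_or_gt with h | h <;> simp [h]
    · simp [mul_assoc, diagonal_mul_diagonal]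

theorem sub_trace_le_frobSq_permMat_mul_diagonal_mul_sub_one {A : Matrix (Fin p) (Fin p) ℝ}
    (hrow : ∀ i, ∑ j, A i j ^ 2 ≠ 0) (σ : Equiv.Perm (Fin p)) (c : Fin p → ℝ) :
    p - trace (permMat p σ * Atilde A) ≤ frobSq (permMat p σ * diagonal c * A - 1) := by
  rw [frobSq_permMat_mul_diagonal_mul_sub_one hrow, le_add_iff_nonneg_right]
  exact sum_nonneg fun i _ => mul_nonneg (sum_nonneg fun j _ => sq_nonneg _) (sq_nonneg _)

theorem sInf_frobSq_PJDset {A : Matrix (Fin p) (Fin p) ℝ} (hrow : ∀ i, ∑ j, A i j ^ 2 ≠ 0) :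
    sInf ((fun C => frobSq (C * A - 1)) '' PJDset p)
      = (p : ℝ) - Finset.univ.sup' Finset.univ_nonempty
          (fun σ : Equiv.Perm (Fin p) => trace (permMat p σ * Atilde A)) := by
  set T := Finset.univ.sup' Finset.univ_nonempty
    (fun σ : Equiv.Perm (Fin p) => trace (permMat p σ * Atilde A))
  have hlower : ∀ x ∈ (fun C => frobSq (C * A - 1)) '' PJDset p, (p : ℝ) - T ≤ x := by
    rintro _ ⟨_, hC, rfl⟩
    obtain ⟨σ, c, -, rfl⟩ := mem_PJDset_iff.mp hC
    have hσ : trace (permMat p σ * Atilde A) ≤ T :=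
      le_sup' (fun σ : Equiv.Perm (Fin p) => trace (permMat p σ * Atilde A)) (mem_univ σ)
    linarith [sub_trace_le_frobSq_permMat_mul_diagonal_mul_sub_one hrow σ c]
  have hne : ((fun C => frobSq (C * A - 1)) '' PJDset p).Nonempty :=
    ⟨_, _, mem_PJDset_iff.mpr ⟨1, 1, fun _ => one_ne_zero, rfl⟩, rfl⟩
  refine le_antisymm ?_ (le_csInf hne hlower)
  obtain ⟨σ₀, -, hσ₀⟩ := exists_mem_eq_sup' univ_nonempty
    (fun σ : Equiv.Perm (Fin p) => trace (permMat p σ * Atilde A))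
  have hdense : Dense (Set.univ.pi fun _ : Fin p => ({0}ᶜ : Set ℝ)) :=
    dense_pi _ fun _ _ => dense_compl_singleton 0
  have hmaps : Set.MapsTo (fun c => frobSq (permMat p σ₀ * diagonal c * A - 1))
      (Set.univ.pi fun _ => {0}ᶜ) ((fun C => frobSq (C * A - 1)) '' PJDset p) :=
    fun c hc => ⟨_, mem_PJDset_iff.mpr ⟨σ₀, c, fun i => hc i (Set.mem_univ i), rfl⟩, rfl⟩
  have hcont : Continuous fun c => frobSq (permMat p σ₀ * diagonal c * A - 1) := by
    simp only [frobSq_permMat_mul_diagonal_mul_sub_one hrow]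
    fun_prop
  have hle := csInf_le_of_mapsTo_of_dense hcont hdense ⟨_, hlower⟩ hmaps
    fun i => A i (σ₀ i) / ∑ j, A i j ^ 2
  simpa [frobSq_permMat_mul_diagonal_mul_sub_one hrow, ← hσ₀] using hle

end

theorem stmt17_general (p : ℕ) (A : Matrix (Fin p) (Fin p) ℝ)
    (hrow : ∀ i, 0 < ∑ j, (A i j) ^ 2) :
    frobSq (Matrix.diagonal (fun i => A i i / ∑ j, (A i j) ^ 2) * A - 1)
      = (p : ℝ) - ∑ i, Atilde A i i ∧
    (∀ L' : Fin p → ℝ,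
      frobSq (Matrix.diagonal (fun i => A i i / ∑ j, (A i j) ^ 2) * A - 1)
        ≤ frobSq (Matrix.diagonal L' * A - 1)) ∧
    sInf ((fun C => frobSq (C * A - 1)) '' PJDset p)
      = (p : ℝ) - Finset.univ.sup' Finset.univ_nonempty
          (fun σ : Equiv.Perm (Fin p) => Matrix.trace (permMat p σ * Atilde A)) := by
  have hrow' : ∀ i, ∑ j, A i j ^ 2 ≠ 0 := fun i => (hrow i).ne'
  have hoptimal : frobSq (diagonal (fun i => A i i / ∑ j, A i j ^ 2) * A - 1)
      = p - ∑ i, Atilde A i i := by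
    have h := frobSq_permMat_mul_diagonal_mul_sub_one hrow' 1 fun i => A i i / ∑ j, A i j ^ 2
    rw [permMat_one, one_mul] at h
    simp [h, trace]
  refine ⟨hoptimal, fun L => ?_, sInf_frobSq_PJDset hrow'⟩
  simpa [hoptimal, permMat_one, trace] using
    sub_trace_le_frobSq_permMat_mul_diagonal_mul_sub_one hrow' 1 L

theorem stmt17 (p : ℕ) (hp : 1 ≤ p) (A : Matrix (Fin p) (Fin p) ℝ)
    (hrow : ∀ i, 0 < ∑ j, (A i j) ^ 2) (hdiag : ∀ i, A i i ≠ 0) :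
    frobSq (Matrix.diagonal (fun i => A i i / ∑ j, (A i j) ^ 2) * A - 1)
      = (p : ℝ) - ∑ i, Atilde A i i ∧
    (∀ L' : Fin p → ℝ,
      frobSq (Matrix.diagonal (fun i => A i i / ∑ j, (A i j) ^ 2) * A - 1)
        ≤ frobSq (Matrix.diagonal L' * A - 1)) ∧
    sInf ((fun C => frobSq (C * A - 1)) '' PJDset p)
      = (p : ℝ) - Finset.univ.sup' Finset.univ_nonempty
          (fun σ : Equiv.Perm (Fin p) => Matrix.trace (permMat p σ * Atilde A)) :=
  stmt17_general p A hrow
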